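/- Let M be an n×n real symmetric matrix, let λ ∈ ℝ be an eigenvalue of M whose eigenspace {x : M x = λ x} is one-dimensional, and let φ ≠ 0 satisfy M φ = λ φ. Then the (n+1)×(n+1) bordered block matrix [[M - λI, -φ], [-φᵀ, 0]] is invertible. -/

import Mathlib

open Matrix

/-!
If `A` is symmetric with kernel spanned by `b` and `b ⬝ᵥ b ≠ 0`, a kernel vector `(x, t)` of
`[[A, b], [bᵀ, 0]]` satisfies `A x + t b = 0` and `b ⬝ᵥ x = 0`. Pairing the first equation with
`b` kills `A x` (as `bᵀ A = (A b)ᵀ = 0`), so `t = 0`; then `x ∈ ker A = span b`, and `b ⬝ᵥ x = 0`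
forces `x = 0`. The theorem is the case `A = M - λ I`, `b = -φ`.
-/

section Bordered

variable {K ι : Type*} [Field K] [Fintype ι]

theorem Matrix.IsSymm.dotProduct_mulVec_eq_zero {A : Matrix ι ι K} (hA : A.IsSymm) {b : ι → K}
    (hAb : A *ᵥ b = 0) (x : ι → K) : b ⬝ᵥ (A *ᵥ x) = 0 := by
  rw [dotProduct_mulVec, ← mulVec_transpose, hA.eq, hAb, zero_dotProduct]

theorem Matrix.IsSymm.eq_zero_of_mulVec_add_smul_eq_zero {A : Matrix ι ι K} (hA : A.IsSymm)
    {b : ι → K} (hAb : A *ᵥ b = 0) (hbb : b ⬝ᵥ b ≠ 0) (hker : ∀ x, A *ᵥ x = 0 → ∃ c : K, x = c • b)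
    {x : ι → K} {t : K} (hx : A *ᵥ x + t • b = 0) (hbx : b ⬝ᵥ x = 0) : x = 0 ∧ t = 0 := by
  have ht : t = 0 := by
    have h := congrArg (b ⬝ᵥ ·) hx
    simp only [dotProduct_add, hA.dotProduct_mulVec_eq_zero hAb, dotProduct_smul, smul_eq_mul,
      zero_add, dotProduct_zero, mul_eq_zero, hbb, or_false] at h
    exact h
  obtain ⟨c, rfl⟩ := hker x (by simpa [ht] using hx)
  have hc : c = 0 := by
    simpa [dotProduct_smul, hbb] using hbx
  simp [hc, ht]

theorem Matrix.isUnit_fromBlocks_replicateCol_replicateRow [DecidableEq ι] {A : Matrix ι ι K}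
    (hA : A.IsSymm) {b : ι → K} (hAb : A *ᵥ b = 0) (hbb : b ⬝ᵥ b ≠ 0)
    (hker : ∀ x, A *ᵥ x = 0 → ∃ c : K, x = c • b) :
    IsUnit (fromBlocks A (replicateCol Unit b) (replicateRow Unit b) 0) := by
  refine mulVec_injective_iff_isUnit.mp fun v w hvw => sub_eq_zero.mp ?_
  set u := v - w
  have hu : fromBlocks A (replicateCol Unit b) (replicateRow Unit b) 0 *ᵥ u = 0 := by
    rw [mulVec_sub, hvw, sub_self]
  rw [fromBlocks_mulVec] at hu
  have hx : A *ᵥ (u ∘ Sum.inl) + u (Sum.inr ()) • b = 0 := funext fun i => by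
    simpa [replicateCol_mulVec, mulVec, dotProduct, mul_comm] using congrFun hu (Sum.inl i)
  have hbx : b ⬝ᵥ (u ∘ Sum.inl) = 0 := by
    simpa [replicateRow_mulVec_eq_const] using congrFun hu (Sum.inr ())
  obtain ⟨hx0, ht0⟩ := hA.eq_zero_of_mulVec_add_smul_eq_zero hAb hbb hker hx hbx
  ext (i | ⟨⟩)
  · exact congrFun hx0 i
  · exact ht0

end Bordered

theorem stmt_10 (n : ℕ) (M : Matrix (Fin n) (Fin n) ℝ) (hM : M.IsSymm)
    (lam : ℝ) (φ : Fin n → ℝ) (hφ : φ ≠ 0)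
    (heig : M.mulVec φ = lam • φ)
    (hsimple : ∀ x : Fin n → ℝ, M.mulVec x = lam • x → ∃ c : ℝ, x = c • φ) :
    IsUnit (Matrix.fromBlocks (M - lam • (1 : Matrix (Fin n) (Fin n) ℝ))
      (Matrix.of fun (i : Fin n) (_ : Unit) => -φ i)
      (Matrix.of fun (_ : Unit) (j : Fin n) => -φ j)
      (0 : Matrix Unit Unit ℝ)) := by
  have hker : ∀ x, (M - lam • (1 : Matrix (Fin n) (Fin n) ℝ)) *ᵥ x = 0 ↔ M *ᵥ x = lam • x := by
    intro x
    rw [sub_mulVec, smul_mulVec, one_mulVec, sub_eq_zero]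
  refine isUnit_fromBlocks_replicateCol_replicateRow (b := -φ) (hM.sub (isSymm_one.smul lam))
    ?_ ?_ ?_
  · rw [mulVec_neg, (hker φ).mpr heig, neg_zero]
  · rwa [neg_dotProduct_neg, Ne, dotProduct_self_eq_zero]
  · intro x hx
    obtain ⟨c, rfl⟩ := hsimple x ((hker x).mp hx)
    exact ⟨-c, by rw [neg_smul_neg]⟩
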